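/- In the game (R_S, C_S) above, if (x, y) is an ε-WNE for ε ∈ [0, 1/3), and σ(x^L), σ(y^L), σ(x^R), σ(y^R) all lie in [1/3, 2/3], then (x^L/σ(x^L), y^L/σ(y^L)) is a 3ε-well-supported Nash equilibrium of the game (A_S, B_S), and (y^R/σ(y^R), x^R/σ(x^R)) is a 3ε-WNE of (A_S, B_S) as well. -/

import Mathlib

open Finset

def InSimplex {I : Type*} [Fintype I] (x : I → ℝ) : Prop :=
  (∀ i, 0 ≤ x i) ∧ ∑ i, x i = 1

def IsWNE {I : Type*} [Fintype I] (R C : Matrix I I ℝ) (ε : ℝ)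
    (x y : I → ℝ) : Prop :=
  (∀ i, 0 < x i → ∀ k, (∑ j, R k j * y j) - ε ≤ ∑ j, R i j * y j) ∧
  (∀ j, 0 < y j → ∀ k, (∑ i, x i * C i k) - ε ≤ ∑ i, x i * C i j)

/-- Row matrix R_S = [[2+A, −2],[−2, 2+Bᵀ]] of the combined game. -/
def mpR {n : ℕ} (A B : Matrix (Fin n) (Fin n) ℝ) :
    Matrix (Fin n ⊕ Fin n) (Fin n ⊕ Fin n) ℝ := fun i j =>
  match i, j with
  | .inl a, .inl b => 2 + A a b
  | .inl _, .inr _ => -2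
  | .inr _, .inl _ => -2
  | .inr a, .inr b => 2 + B b a

/-- Column matrix C_S = [[−2+B, 2],[2, −2+Aᵀ]] of the combined game. -/
def mpC {n : ℕ} (A B : Matrix (Fin n) (Fin n) ℝ) :
    Matrix (Fin n ⊕ Fin n) (Fin n ⊕ Fin n) ℝ := fun i j =>
  match i, j with
  | .inl a, .inl b => -2 + B a b
  | .inl _, .inr _ => 2
  | .inr _, .inl _ => 2
  | .inr a, .inr b => -2 + A b a

/-! Inside a diagonal block of `mpR A B` / `mpC A B` the offsets `±2` do not depend on the pure
strategy, so they cancel when two pure strategies of the same block are compared: restricted to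
the left halves, an `ε`-WNE of the big game is an `ε`-WNE of `(A, B)`, and restricted to the
right halves (with the players swapped) one of `(A, B)` again. Normalizing a half of mass
`s ≥ 1/3` divides all payoffs by `s`, which multiplies the slack `ε` by at most `3`. -/

lemma div_sub_le_div_of_sub_le {P Q S c ε : ℝ} (h : P - ε ≤ Q) (hS : 0 < S) (hcS : 1 ≤ c * S)
    (hε : 0 ≤ ε) : P / S - c * ε ≤ Q / S := by
  have : (P - Q) / S ≤ c * ε := by
    rw [div_le_iff₀ hS]
    nlinarith
  rw [sub_div] at this
  linarith

lemma IsWNE.div_const {I : Type*} [Fintype I] {R C : Matrix I I ℝ} {ε c s t : ℝ}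
    {x y : I → ℝ} (h : IsWNE R C ε x y) (hε : 0 ≤ ε) (hs : 0 < s) (ht : 0 < t)
    (hcs : 1 ≤ c * s) (hct : 1 ≤ c * t) :
    IsWNE R C (c * ε) (fun i => x i / s) (fun j => y j / t) := by
  constructor
  · intro i hi k
    simp only [mul_div_assoc', ← Finset.sum_div]
    exact div_sub_le_div_of_sub_le (h.1 i ((div_pos_iff_of_pos_right hs).mp hi) k) ht hct hε
  · intro j hj k
    simp only [div_mul_eq_mul_div, ← Finset.sum_div]
    exact div_sub_le_div_of_sub_le (h.2 j ((div_pos_iff_of_pos_right ht).mp hj) k) hs hcs hε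

section CombinedGame

variable {n : ℕ} (A B : Matrix (Fin n) (Fin n) ℝ)

lemma sum_mpR_inl_mul (y : Fin n ⊕ Fin n → ℝ) (i : Fin n) :
    ∑ j, mpR A B (.inl i) j * y j
      = 2 * ∑ b, y (.inl b) - 2 * ∑ b, y (.inr b) + ∑ b, A i b * y (.inl b) := by
  simp only [Fintype.sum_sum_type, mpR, add_mul, neg_mul, Finset.sum_add_distrib,
    Finset.sum_neg_distrib, ← Finset.mul_sum]
  ring

lemma sum_mpR_inr_mul (y : Fin n ⊕ Fin n → ℝ) (j : Fin n) :
    ∑ b, mpR A B (.inr j) b * y b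
      = 2 * ∑ b, y (.inr b) - 2 * ∑ b, y (.inl b) + ∑ b, y (.inr b) * B b j := by
  simp only [Fintype.sum_sum_type, mpR, add_mul, neg_mul, Finset.sum_add_distrib,
    Finset.sum_neg_distrib, ← Finset.mul_sum, mul_comm (B _ _)]
  ring

lemma sum_mul_mpC_inl (x : Fin n ⊕ Fin n → ℝ) (j : Fin n) :
    ∑ i, x i * mpC A B i (.inl j)
      = 2 * ∑ a, x (.inr a) - 2 * ∑ a, x (.inl a) + ∑ a, x (.inl a) * B a j := by
  simp only [Fintype.sum_sum_type, mpC, mul_add, mul_neg, mul_comm _ (2 : ℝ),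
    Finset.sum_add_distrib, Finset.sum_neg_distrib, ← Finset.mul_sum]
  ring

lemma sum_mul_mpC_inr (x : Fin n ⊕ Fin n → ℝ) (i : Fin n) :
    ∑ a, x a * mpC A B a (.inr i)
      = 2 * ∑ a, x (.inl a) - 2 * ∑ a, x (.inr a) + ∑ a, A i a * x (.inr a) := by
  simp only [Fintype.sum_sum_type, mpC, mul_add, mul_neg, mul_comm _ (2 : ℝ),
    Finset.sum_add_distrib, Finset.sum_neg_distrib, ← Finset.mul_sum, mul_comm (x _) (A _ _)]
  ring

variable {A B}

lemma IsWNE.mp_inl {ε : ℝ} {x y : Fin n ⊕ Fin n → ℝ} (h : IsWNE (mpR A B) (mpC A B) ε x y) :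
    IsWNE A B ε (fun a => x (.inl a)) (fun a => y (.inl a)) := by
  constructor
  · intro i hi k
    have := h.1 (.inl i) hi (.inl k)
    rw [sum_mpR_inl_mul, sum_mpR_inl_mul] at this
    linarith
  · intro j hj k
    have := h.2 (.inl j) hj (.inl k)
    rw [sum_mul_mpC_inl, sum_mul_mpC_inl] at this
    linarith

lemma IsWNE.mp_inr {ε : ℝ} {x y : Fin n ⊕ Fin n → ℝ} (h : IsWNE (mpR A B) (mpC A B) ε x y) :
    IsWNE A B ε (fun a => y (.inr a)) (fun a => x (.inr a)) := by
  constructor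
  · intro i hi k
    have := h.2 (.inr i) hi (.inr k)
    rw [sum_mul_mpC_inr, sum_mul_mpC_inr] at this
    linarith
  · intro j hj k
    have := h.1 (.inr j) hj (.inr k)
    rw [sum_mpR_inr_mul, sum_mpR_inr_mul] at this
    linarith

end CombinedGame

theorem mp_combined_restriction_is_wne_general {n : ℕ}
    (A B : Matrix (Fin n) (Fin n) ℝ)
    (ε : ℝ) (hε0 : 0 ≤ ε)
    (x y : Fin n ⊕ Fin n → ℝ)
    (h : IsWNE (mpR A B) (mpC A B) ε x y)
    (hxL : (∑ a : Fin n, x (Sum.inl a)) ∈ Set.Icc (1/3 : ℝ) (2/3))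
    (hxR : (∑ a : Fin n, x (Sum.inr a)) ∈ Set.Icc (1/3 : ℝ) (2/3))
    (hyL : (∑ a : Fin n, y (Sum.inl a)) ∈ Set.Icc (1/3 : ℝ) (2/3))
    (hyR : (∑ a : Fin n, y (Sum.inr a)) ∈ Set.Icc (1/3 : ℝ) (2/3)) :
    IsWNE A B (3 * ε)
      (fun a => x (Sum.inl a) / ∑ a : Fin n, x (Sum.inl a))
      (fun a => y (Sum.inl a) / ∑ a : Fin n, y (Sum.inl a)) ∧
    IsWNE A B (3 * ε)
      (fun a => y (Sum.inr a) / ∑ a : Fin n, y (Sum.inr a))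
      (fun a => x (Sum.inr a) / ∑ a : Fin n, x (Sum.inr a)) := by
  have pos {s : ℝ} (hs : s ∈ Set.Icc (1/3 : ℝ) (2/3)) : 0 < s := by linarith [hs.1]
  have three_mul {s : ℝ} (hs : s ∈ Set.Icc (1/3 : ℝ) (2/3)) : 1 ≤ 3 * s := by linarith [hs.1]
  exact ⟨h.mp_inl.div_const hε0 (pos hxL) (pos hyL) (three_mul hxL) (three_mul hyL),
    h.mp_inr.div_const hε0 (pos hyR) (pos hxR) (three_mul hyR) (three_mul hxR)⟩

/-- if (x,y) is an ε-WNE of the combined game (ε < 1/3) and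
each of the four half-masses lies in [1/3, 2/3], then the normalized left
halves form a 3ε-WNE of (A,B) and so do the normalized (yᴿ, xᴿ). -/
theorem mp_combined_restriction_is_wne {n : ℕ}
    (A B : Matrix (Fin n) (Fin n) ℝ)
    (ε : ℝ) (hε0 : 0 ≤ ε) (hε1 : ε < 1/3)
    (x y : Fin n ⊕ Fin n → ℝ) (hx : InSimplex x) (hy : InSimplex y)
    (h : IsWNE (mpR A B) (mpC A B) ε x y)
    (hxL : (∑ a : Fin n, x (Sum.inl a)) ∈ Set.Icc (1/3 : ℝ) (2/3))
    (hxR : (∑ a : Fin n, x (Sum.inr a)) ∈ Set.Icc (1/3 : ℝ) (2/3))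
    (hyL : (∑ a : Fin n, y (Sum.inl a)) ∈ Set.Icc (1/3 : ℝ) (2/3))
    (hyR : (∑ a : Fin n, y (Sum.inr a)) ∈ Set.Icc (1/3 : ℝ) (2/3)) :
    IsWNE A B (3 * ε)
      (fun a => x (Sum.inl a) / ∑ a : Fin n, x (Sum.inl a))
      (fun a => y (Sum.inl a) / ∑ a : Fin n, y (Sum.inl a)) ∧
    IsWNE A B (3 * ε)
      (fun a => y (Sum.inr a) / ∑ a : Fin n, y (Sum.inr a))
      (fun a => x (Sum.inr a) / ∑ a : Fin n, x (Sum.inr a)) :=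
  mp_combined_restriction_is_wne_general A B ε hε0 x y h hxL hxR hyL hyR
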